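/- Let G = (V, w) be a weighted graph and ℒ a maximal cross-free family of cuts of G such that every cut in ℒ has the same weight c. Then the minimum cut weight of G equals c. -/

import Mathlib

open Finset

/-- Two finite sets overlap if their intersection and both differences are nonempty. -/
def overlap {V : Type*} [DecidableEq V] (X Y : Finset V) : Prop :=
  (X ∩ Y).Nonempty ∧ (X \ Y).Nonempty ∧ (Y \ X).Nonempty

/-- Two shores cross if all four corner sets are nonempty. -/
def crossing {V : Type*} [DecidableEq V] [Fintype V] (X Y : Finset V) : Prop :=
  (X ∩ Y).Nonempty ∧ (X \ Y).Nonempty ∧ (Y \ X).Nonempty ∧ (Xᶜ ∩ Yᶜ).Nonempty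

/-- X is the shore of a cut: nonempty and proper. -/
def isCutShore {V : Type*} [Fintype V] (X : Finset V) : Prop :=
  X.Nonempty ∧ X ≠ Finset.univ

/-- The weight of the cut Δ(X) in the weighted graph with (symmetric) weights w. -/
noncomputable def cutWeight {V : Type*} [DecidableEq V] [Fintype V]
    (w : V → V → ℝ) (X : Finset V) : ℝ :=
  (1/2) * ∑ p : V × V,
    if (p.1 ∈ X ∧ p.2 ∉ X) ∨ (p.2 ∈ X ∧ p.1 ∉ X) then w p.1 p.2 else 0

/-- Δ(X) is a minimum cut. -/
def isMinCut {V : Type*} [DecidableEq V] [Fintype V] (w : V → V → ℝ) (X : Finset V) : Prop :=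
  isCutShore X ∧ ∀ Y : Finset V, isCutShore Y → cutWeight w X ≤ cutWeight w Y

/-- The characteristic vector of the cut Δ(X) among the edges (pairs of positive weight). -/
noncomputable def cutVec {V : Type*} [DecidableEq V] [Fintype V]
    (w : V → V → ℝ) (X : Finset V) : V × V → ℝ :=
  fun p => if (((p.1 ∈ X ∧ p.2 ∉ X) ∨ (p.2 ∈ X ∧ p.1 ∉ X)) ∧ 0 < w p.1 p.2) then 1 else 0

/-!
Induct on the number of members of `L` that a shore `X` crosses. If `X` crosses `Y ∈ L`, then
`X ∩ Y` and `X ∪ Y` cross only members of `L` that `X` crosses, and neither crosses `Y`, so both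
cross fewer members. By induction both have weight at least `c`, and submodularity of the cut
weight gives `w(X ∩ Y) + w(X ∪ Y) ≤ w(X) + w(Y) = w(X) + c`, hence `c ≤ w(X)`.
-/

section Crossing

variable {V : Type*} [DecidableEq V] [Fintype V]

lemma crossing_compl_left {X Y : Finset V} : crossing Xᶜ Y ↔ crossing X Y := by
  simp only [crossing, Finset.Nonempty, mem_inter, mem_sdiff, mem_compl, not_not]
  tauto

lemma crossing_compl_right {X Y : Finset V} : crossing X Yᶜ ↔ crossing X Y := by
  simp only [crossing, Finset.Nonempty, mem_inter, mem_sdiff, mem_compl, not_not]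
  tauto

lemma not_crossing_of_subset {X Y : Finset V} (h : X ⊆ Y) : ¬ crossing X Y := by
  rintro ⟨-, hXY, -, -⟩
  simp [sdiff_eq_empty_iff_subset.mpr h] at hXY

lemma not_crossing_of_superset {X Y : Finset V} (h : Y ⊆ X) : ¬ crossing X Y := by
  rintro ⟨-, -, hYX, -⟩
  simp [sdiff_eq_empty_iff_subset.mpr h] at hYX

lemma crossing_of_crossing_inter {X Y W : Finset V} (hXY : crossing X Y)
    (hYW : ¬ crossing Y W) (h : crossing (X ∩ Y) W) : crossing X W := by
  simp only [crossing, Finset.Nonempty, mem_inter, mem_sdiff, mem_compl] at *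
  obtain ⟨⟨a, ⟨haX, haY⟩, haW⟩, ⟨b, ⟨hbX, hbY⟩, hbW⟩, ⟨d, hdW, hd⟩, ⟨e, he, heW⟩⟩ := h
  obtain ⟨u, huX, huY⟩ := hXY.2.2.2
  refine ⟨⟨a, haX, haW⟩, ⟨b, hbX, hbW⟩, ?_⟩
  -- `Y` meets `W` and `Y \ W`, so not crossing means `W ⊆ Y` or `Y ∪ W = univ`
  have hYW : (∀ z ∈ W, z ∈ Y) ∨ ∀ z, z ∉ Y → z ∈ W := by
    by_contra! hc
    exact hYW ⟨⟨a, haY, haW⟩, ⟨b, hbY, hbW⟩, hc.1, hc.2⟩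
  rcases hYW with hWY | hYW
  · exact ⟨⟨d, hdW, fun hdX => hd ⟨hdX, hWY d hdW⟩⟩, ⟨u, huX, fun huW => huY (hWY u huW)⟩⟩
  · refine ⟨⟨u, hYW u huY, huX⟩, ⟨e, fun heX => he ⟨heX, ?_⟩, heW⟩⟩
    exact not_not.mp fun heY => heW (hYW e heY)

lemma crossing_of_crossing_union {X Y W : Finset V} (hXY : crossing X Y)
    (hYW : ¬ crossing Y W) (h : crossing (X ∪ Y) W) : crossing X W := by
  rw [← crossing_compl_left, compl_union] at h
  rw [← crossing_compl_left]
  exact crossing_of_crossing_inter (crossing_compl_left.mpr (crossing_compl_right.mpr hXY))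
    (mt crossing_compl_left.mp hYW) h

lemma isCutShore_inter_of_crossing {X Y : Finset V} (h : crossing X Y) :
    isCutShore (X ∩ Y) := by
  obtain ⟨hXY, -, -, u, hu⟩ := h
  refine ⟨hXY, fun huniv => ?_⟩
  have hu' : u ∈ X ∩ Y := huniv ▸ mem_univ u
  simp_all

lemma isCutShore_union_of_crossing {X Y : Finset V} (h : crossing X Y) :
    isCutShore (X ∪ Y) := by
  obtain ⟨-, hXY, -, u, hu⟩ := h
  refine ⟨hXY.mono (sdiff_subset.trans subset_union_left), fun huniv => ?_⟩
  rw [← compl_union, huniv] at hu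
  simp at hu

open scoped Classical in
noncomputable def crossCount (L : Finset (Finset V)) (X : Finset V) : ℕ :=
  #{Y ∈ L | crossing X Y}

open scoped Classical in
lemma crossCount_lt {L : Finset (Finset V)} {X Y Z : Finset V} (hY : Y ∈ L)
    (hXY : crossing X Y) (hZY : ¬ crossing Z Y)
    (hZX : ∀ W ∈ L, crossing Z W → crossing X W) : crossCount L Z < crossCount L X := by
  refine card_lt_card ⟨fun W hW => ?_, fun hsub => ?_⟩
  · rw [mem_filter] at hW ⊢
    exact ⟨hW.1, hZX W hW.1 hW.2⟩
  · exact hZY (mem_filter.mp (hsub (mem_filter.mpr ⟨hY, hXY⟩))).2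

lemma le_of_maximal_crossFree {f : Finset V → ℝ} (hcompl : ∀ X, f Xᶜ = f X)
    (hsub : ∀ X Y, f (X ∩ Y) + f (X ∪ Y) ≤ f X + f Y) {L : Finset (Finset V)} {c : ℝ}
    (hcrossfree : ∀ X ∈ L, ∀ Y ∈ L, ¬ crossing X Y)
    (hmax : ∀ X : Finset V, isCutShore X → X ∉ L → Xᶜ ∉ L → ∃ Y ∈ L, crossing X Y)
    (hconst : ∀ X ∈ L, f X = c) (X : Finset V) (hX : isCutShore X) : c ≤ f X := by
  induction hn : crossCount L X using Nat.strong_induction_on generalizing X with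
  | _ n ih =>
  by_cases hXL : X ∈ L
  · exact (hconst X hXL).ge
  by_cases hXcL : Xᶜ ∈ L
  · exact hcompl X ▸ (hconst _ hXcL).ge
  obtain ⟨Y, hYL, hXY⟩ := hmax X hX hXL hXcL
  have hinter : c ≤ f (X ∩ Y) :=
    ih _ (hn ▸ crossCount_lt hYL hXY (not_crossing_of_subset inter_subset_right)
      fun W hW => crossing_of_crossing_inter hXY (hcrossfree Y hYL W hW))
      _ (isCutShore_inter_of_crossing hXY) rfl
  have hunion : c ≤ f (X ∪ Y) :=
    ih _ (hn ▸ crossCount_lt hYL hXY (not_crossing_of_superset subset_union_right)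
      fun W hW => crossing_of_crossing_union hXY (hcrossfree Y hYL W hW))
      _ (isCutShore_union_of_crossing hXY) rfl
  linarith [hsub X Y, hconst Y hYL]

end Crossing

section CutWeight

variable {V : Type*} [DecidableEq V] [Fintype V]

lemma cutWeight_compl (w : V → V → ℝ) (X : Finset V) : cutWeight w Xᶜ = cutWeight w X := by
  unfold cutWeight
  congr 1
  refine sum_congr rfl fun p _ => if_congr ?_ rfl rfl
  simp only [mem_compl, not_not]
  tauto

lemma cutWeight_inter_add_cutWeight_union_le {w : V → V → ℝ} (hnn : ∀ i j, 0 ≤ w i j)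
    (X Y : Finset V) :
    cutWeight w (X ∩ Y) + cutWeight w (X ∪ Y) ≤ cutWeight w X + cutWeight w Y := by
  unfold cutWeight
  rw [← mul_add, ← mul_add, ← sum_add_distrib, ← sum_add_distrib]
  refine mul_le_mul_of_nonneg_left (sum_le_sum fun p _ => ?_) (by norm_num)
  have hw := hnn p.1 p.2
  by_cases h1 : p.1 ∈ X <;> by_cases h2 : p.2 ∈ X <;> by_cases h3 : p.1 ∈ Y <;>
    by_cases h4 : p.2 ∈ Y <;> simp [h1, h2, h3, h4] <;> linarith

end CutWeight

lemma exists_isCutShore {V : Type*} [Fintype V] (hV : 2 ≤ Fintype.card V) :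
    ∃ X : Finset V, isCutShore X := by
  obtain ⟨v⟩ := Fintype.card_pos_iff (α := V) |>.mp (by omega)
  refine ⟨{v}, singleton_nonempty v, fun h => ?_⟩
  have := congr_arg card h
  rw [card_singleton, card_univ] at this
  omega

theorem stmt9_general {V : Type*} [DecidableEq V] [Fintype V] (hV : 2 ≤ Fintype.card V)
    (w : V → V → ℝ) (hnn : ∀ i j, 0 ≤ w i j)
    (L : Finset (Finset V)) (c : ℝ)
    (hshore : ∀ X ∈ L, isCutShore X)
    (hcrossfree : ∀ X ∈ L, ∀ Y ∈ L, ¬ crossing X Y)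
    (hmax : ∀ X : Finset V, isCutShore X → X ∉ L → Xᶜ ∉ L → ∃ Y ∈ L, crossing X Y)
    (hweight : ∀ X ∈ L, cutWeight w X = c) :
    IsLeast {d | ∃ X : Finset V, isCutShore X ∧ cutWeight w X = d} c := by
  refine ⟨?_, ?_⟩
  · obtain ⟨X, hX⟩ := exists_isCutShore hV
    obtain ⟨Y, hY⟩ : L.Nonempty := by
      by_contra hL
      rw [not_nonempty_iff_eq_empty] at hL
      subst hL
      simpa using hmax X hX
    exact ⟨Y, hshore Y hY, hweight Y hY⟩
  · rintro d ⟨X, hX, rfl⟩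
    exact le_of_maximal_crossFree (cutWeight_compl w) (cutWeight_inter_add_cutWeight_union_le hnn)
      hcrossfree hmax hweight X hX

/-- If all cuts of a maximal cross-free family of cuts have the same weight `c`,
then `c` is the minimum cut weight of the graph. -/
theorem stmt9 {V : Type*} [DecidableEq V] [Fintype V] (hV : 2 ≤ Fintype.card V)
    (w : V → V → ℝ) (hsym : ∀ i j, w i j = w j i) (hnn : ∀ i j, 0 ≤ w i j)
    (L : Finset (Finset V)) (c : ℝ)
    (hshore : ∀ X ∈ L, isCutShore X)
    (hcrossfree : ∀ X ∈ L, ∀ Y ∈ L, ¬ crossing X Y)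
    (hmax : ∀ X : Finset V, isCutShore X → X ∉ L → Xᶜ ∉ L → ∃ Y ∈ L, crossing X Y)
    (hweight : ∀ X ∈ L, cutWeight w X = c) :
    IsLeast {d | ∃ X : Finset V, isCutShore X ∧ cutWeight w X = d} c :=
  stmt9_general hV w hnn L c hshore hcrossfree hmax hweight
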